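/- arXiv:1307.2652 — 2 statements merged into one kernel-verified Lean document; each statement's English description precedes it below -/
import Mathlib

section
/- Let k(z,z) = (1 - |θ(z)|²)/(1 - |z|²) where θ is a holomorphic self-map of the unit disk with |θ(z)| ≤ 1. Then for all z in the open unit disk, Δ k(z,z) ≤ 4 (1+|z|)² (1-|θ(z)|²)/(1-|z|²)³, where Δ is the Laplacian in z acting on the function z ↦ k(z,z). -/
/-- The planar Laplacian `Δu = ∂²u/∂x² + ∂²u/∂y²` of `u : ℂ → ℝ` at `z = x + iy`. -/
noncomputable def planarLaplacian (u : ℂ → ℝ) (z : ℂ) : ℝ :=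
  deriv (fun x : ℝ => deriv (fun x' : ℝ => u ((x' : ℂ) + z.im * Complex.I)) x) z.re +
  deriv (fun y : ℝ => deriv (fun y' : ℝ => u ((z.re : ℂ) + y' * Complex.I)) y) z.im

/-!
Along a line `s ↦ w + s v`, a holomorphic `h` has `(|h|²)'' = 2|h' v|² + 2 Re(h̄ h'' v²)`; summing
over `v = 1` and `v = i` cancels the `h''` terms. Feeding this into the second-derivative quotient
rule for `k = (1 - |θ|²)/(1 - |z|²)` gives
`Δk = 4((1 - |θ|²)(1 + |z|²) - 2 Re(θ θ̄' z̄)(1 - |z|²) - |θ'|²(1 - |z|²)²)/(1 - |z|²)³`.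
Dropping the last term and bounding the middle one by `|θ| ≤ 1` and the Schwarz–Pick inequality
`|θ'|(1 - |z|²) ≤ 1 - |θ|²` leaves `4(1 - |θ|²)(1 + |z|)²/(1 - |z|²)³`. Schwarz–Pick is the
Schwarz lemma conjugated by disc automorphisms; if `|θ|` reaches `1` inside the disc, `θ` is
constant by the maximum modulus principle.
-/

open Metric Set Complex Filter Topology ComplexConjugate
open scoped RealInnerProductSpace

lemma one_sub_norm_sq_pos {w : ℂ} (hw : w ∈ ball (0 : ℂ) 1) : 0 < 1 - ‖w‖ ^ 2 := by
  have := mem_ball_zero_iff.mp hw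
  nlinarith [norm_nonneg w]

noncomputable def mobius (a w : ℂ) : ℂ := (w - a) / (1 - conj a * w)

lemma norm_one_sub_conj_mul_sq_sub_norm_sub_sq (a w : ℂ) :
    ‖1 - conj a * w‖ ^ 2 - ‖w - a‖ ^ 2 = (1 - ‖a‖ ^ 2) * (1 - ‖w‖ ^ 2) := by
  apply Complex.ofReal_injective
  push_cast
  simp only [← Complex.mul_conj', map_sub, map_mul, map_one, Complex.conj_conj]
  ring

lemma one_sub_conj_mul_ne_zero {a w : ℂ} (ha : ‖a‖ < 1) (hw : ‖w‖ < 1) :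
    1 - conj a * w ≠ 0 := by
  refine sub_ne_zero.2 fun h => ?_
  have : ‖conj a * w‖ < 1 := by
    rw [norm_mul, RCLike.norm_conj]
    nlinarith [norm_nonneg a, norm_nonneg w]
  simp [← h] at this

lemma mapsTo_mobius {a : ℂ} (ha : ‖a‖ < 1) : MapsTo (mobius a) (ball 0 1) (ball 0 1) := by
  intro w hw
  have hlt : ‖w - a‖ ^ 2 < ‖1 - conj a * w‖ ^ 2 := by
    have := norm_one_sub_conj_mul_sq_sub_norm_sub_sq a w
    have := mul_pos (one_sub_norm_sq_pos (mem_ball_zero_iff.2 ha)) (one_sub_norm_sq_pos hw)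
    linarith
  have hden := one_sub_conj_mul_ne_zero ha (mem_ball_zero_iff.1 hw)
  rw [mem_ball_zero_iff, mobius, norm_div, div_lt_one (norm_pos_iff.mpr hden)]
  exact lt_of_pow_lt_pow_left₀ 2 (norm_nonneg _) hlt

lemma hasDerivAt_mobius {a w : ℂ} (hw : 1 - conj a * w ≠ 0) :
    HasDerivAt (mobius a) ((1 - ‖a‖ ^ 2) / (1 - conj a * w) ^ 2) w := by
  have hnum : HasDerivAt (fun w : ℂ => w - a) 1 w := (hasDerivAt_id w).sub_const a
  have hden : HasDerivAt (fun w : ℂ => 1 - conj a * w) (-conj a) w := by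
    simpa using ((hasDerivAt_id w).const_mul (conj a)).const_sub 1
  refine (hnum.div hden hw).congr_deriv ?_
  rw [← Complex.mul_conj']
  ring

lemma differentiableOn_mobius {a : ℂ} (ha : ‖a‖ < 1) :
    DifferentiableOn ℂ (mobius a) (ball 0 1) := fun _ hw =>
  (hasDerivAt_mobius (one_sub_conj_mul_ne_zero ha (mem_ball_zero_iff.mp hw))).differentiableAt
    |>.differentiableWithinAt

theorem norm_deriv_mul_le_of_mapsTo_ball {f : ℂ → ℂ} (hf : DifferentiableOn ℂ f (ball 0 1))
    (hmaps : MapsTo f (ball 0 1) (ball 0 1)) {z : ℂ} (hz : z ∈ ball (0 : ℂ) 1) :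
    ‖deriv f z‖ * (1 - ‖z‖ ^ 2) ≤ 1 - ‖f z‖ ^ 2 := by
  have hz' : ‖-z‖ < 1 := by rwa [norm_neg, ← mem_ball_zero_iff]
  have hc : ‖f z‖ < 1 := mem_ball_zero_iff.mp (hmaps hz)
  have hc' : 0 < 1 - ‖f z‖ ^ 2 := one_sub_norm_sq_pos (hmaps hz)
  have hφ0 : mobius (-z) 0 = z := by simp [mobius]
  set F := mobius (f z) ∘ f ∘ mobius (-z)
  have hF : DifferentiableOn ℂ F (ball 0 1) :=
    (differentiableOn_mobius hc).comp (hf.comp (differentiableOn_mobius hz') (mapsTo_mobius hz'))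
      (hmaps.comp (mapsTo_mobius hz'))
  have hFmaps : MapsTo F (ball 0 1) (closedBall (F 0) 1) := by
    have : F 0 = 0 := by simp [F, mobius]
    rw [this]
    exact ((mapsTo_mobius hc).comp (hmaps.comp (mapsTo_mobius hz'))).mono_right
      ball_subset_closedBall
  have hderiv : HasDerivAt F
      (deriv f z * ((1 - ‖z‖ ^ 2 : ℝ) : ℂ) / ((1 - ‖f z‖ ^ 2 : ℝ) : ℂ)) 0 := by
    have h1 : HasDerivAt (mobius (-z)) (1 - ‖z‖ ^ 2) 0 := by
      simpa using hasDerivAt_mobius (a := -z) (w := 0) (by simp)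
    have h2 : HasDerivAt f (deriv f z) (mobius (-z) 0) := by
      rw [hφ0]; exact (hf.differentiableAt (isOpen_ball.mem_nhds hz)).hasDerivAt
    have h3 : HasDerivAt (mobius (f z)) ((1 - ‖f z‖ ^ 2) / (1 - ‖f z‖ ^ 2) ^ 2)
        (f (mobius (-z) 0)) := by
      simpa [hφ0, Complex.conj_mul'] using hasDerivAt_mobius (one_sub_conj_mul_ne_zero hc hc)
    refine (h3.comp 0 (h2.comp 0 h1)).congr_deriv ?_
    have : (1 - (‖f z‖ : ℂ) ^ 2) ≠ 0 := by exact_mod_cast hc'.ne'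
    push_cast
    field_simp
  have hschwarz := Complex.norm_deriv_le_one_of_mapsTo_ball hF hFmaps one_pos
  rwa [hderiv.deriv, norm_div, norm_mul, norm_real, norm_real, Real.norm_of_nonneg hc'.le,
    Real.norm_of_nonneg (one_sub_norm_sq_pos hz).le, div_le_one hc'] at hschwarz

theorem norm_deriv_mul_le_of_norm_le_one {f : ℂ → ℂ} (hf : DifferentiableOn ℂ f (ball 0 1))
    (hle : ∀ w ∈ ball (0 : ℂ) 1, ‖f w‖ ≤ 1) {z : ℂ} (hz : z ∈ ball (0 : ℂ) 1) :
    ‖deriv f z‖ * (1 - ‖z‖ ^ 2) ≤ 1 - ‖f z‖ ^ 2 := by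
  by_cases hmaps : MapsTo f (ball 0 1) (ball 0 1)
  · exact norm_deriv_mul_le_of_mapsTo_ball hf hmaps hz
  obtain ⟨c, hc, hfc⟩ : ∃ c ∈ ball (0 : ℂ) 1, 1 ≤ ‖f c‖ := by
    simpa [MapsTo, mem_ball_zero_iff] using hmaps
  have hmax : IsMaxOn (norm ∘ f) (ball 0 1) c := fun w hw => (hle w hw).trans hfc
  have hconst : f =ᶠ[𝓝 z] fun _ => f c :=
    eventually_of_mem (isOpen_ball.mem_nhds hz) <|
      Complex.eqOn_of_isPreconnected_of_isMaxOn_norm (convex_ball 0 1).isPreconnected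
        isOpen_ball hf hc hmax
  rw [hconst.deriv_eq, deriv_const, norm_zero, zero_mul, sub_nonneg]
  exact pow_le_one₀ (norm_nonneg _) (hle z hz)

section AlongLine

variable {h : ℂ → ℂ} {γ : ℝ → ℂ} {v : ℂ} {t : ℝ}

lemma hasDerivAt_norm_sq_comp (hγ : HasDerivAt γ v t) (hh : DifferentiableAt ℂ h (γ t)) :
    HasDerivAt (fun s => ‖h (γ s)‖ ^ 2) (2 * ⟪h (γ t), deriv h (γ t) * v⟫) t :=
  (hh.hasDerivAt.comp t hγ).norm_sq

lemma hasDerivAt_inner_deriv_comp (hγ : HasDerivAt γ v t) (hh : DifferentiableAt ℂ h (γ t))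
    (hh' : DifferentiableAt ℂ (deriv h) (γ t)) :
    HasDerivAt (fun s => ⟪h (γ s), deriv h (γ s) * v⟫)
      (‖deriv h (γ t) * v‖ ^ 2 + ⟪h (γ t), deriv (deriv h) (γ t) * v * v⟫) t := by
  have := (hh.hasDerivAt.comp t hγ).inner ℝ ((hh'.hasDerivAt.comp t hγ).mul_const v)
  refine this.congr_deriv ?_
  simp only [Function.comp_apply, real_inner_self_eq_norm_sq]
  ring

end AlongLine

theorem deriv_deriv_div {𝕜 : Type*} [NontriviallyNormedField 𝕜] {f g f' g' : 𝕜 → 𝕜}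
    {f'' g'' x : 𝕜} (hf : ∀ᶠ y in 𝓝 x, HasDerivAt f (f' y) y)
    (hg : ∀ᶠ y in 𝓝 x, HasDerivAt g (g' y) y) (hf' : HasDerivAt f' f'' x)
    (hg' : HasDerivAt g' g'' x) (hgx : g x ≠ 0) :
    deriv (deriv fun y => f y / g y) x =
      (f'' * g x - f x * g'') / g x ^ 2 - 2 * g' x * (f' x * g x - f x * g' x) / g x ^ 3 := by
  have hg_ne : ∀ᶠ y in 𝓝 x, g y ≠ 0 := hg.self_of_nhds.continuousAt.eventually_ne hgx
  have hderiv : deriv (fun y => f y / g y) =ᶠ[𝓝 x]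
      fun y => (f' y * g y - f y * g' y) / g y ^ 2 := by
    filter_upwards [hf, hg, hg_ne] with y hfy hgy hgy0 using (hfy.div hgy hgy0).deriv
  rw [hderiv.deriv_eq]
  have := ((hf'.fun_mul hg.self_of_nhds).fun_sub (hf.self_of_nhds.fun_mul hg')).fun_div
    (hg.self_of_nhds.fun_pow 2) (pow_ne_zero 2 hgx)
  rw [this.deriv]
  field_simp
  ring

/-- The diagonal `k(w, w)` of the reproducing kernel of the model space `K_θ`. -/
noncomputable def diagKernel (θ : ℂ → ℂ) (w : ℂ) : ℝ := (1 - ‖θ w‖ ^ 2) / (1 - ‖w‖ ^ 2)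

theorem deriv_deriv_diagKernel_comp {θ : ℂ → ℂ} (hθ : DifferentiableOn ℂ θ (ball 0 1))
    {γ : ℝ → ℂ} {v w : ℂ} {t : ℝ} (hγ : ∀ s, HasDerivAt γ v s) (hγt : γ t = w)
    (hw : w ∈ ball (0 : ℂ) 1) :
    deriv (deriv fun s => diagKernel θ (γ s)) t =
      2 * ((‖v‖ ^ 2 * (1 - ‖θ w‖ ^ 2)
          - (‖deriv θ w * v‖ ^ 2 + ⟪θ w, deriv (deriv θ) w * v * v⟫) * (1 - ‖w‖ ^ 2))
            / (1 - ‖w‖ ^ 2) ^ 2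
        - 4 * ⟪w, v⟫ * (⟪θ w, deriv θ w * v⟫ * (1 - ‖w‖ ^ 2) - ⟪w, v⟫ * (1 - ‖θ w‖ ^ 2))
            / (1 - ‖w‖ ^ 2) ^ 3) := by
  have hθa : AnalyticOnNhd ℂ θ (ball 0 1) := hθ.analyticOnNhd isOpen_ball
  have hnear : ∀ᶠ s in 𝓝 t, γ s ∈ ball (0 : ℂ) 1 :=
    (hγ t).continuousAt.preimage_mem_nhds (by rw [hγt]; exact isOpen_ball.mem_nhds hw)
  have hf : ∀ᶠ s in 𝓝 t, HasDerivAt (fun s => 1 - ‖θ (γ s)‖ ^ 2)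
      (-(2 * ⟪θ (γ s), deriv θ (γ s) * v⟫)) s := by
    filter_upwards [hnear] with s hs
    exact (hasDerivAt_norm_sq_comp (hγ s) (hθa _ hs).differentiableAt).const_sub 1
  have hg : ∀ᶠ s in 𝓝 t, HasDerivAt (fun s => 1 - ‖γ s‖ ^ 2) (-(2 * ⟪γ s, v⟫)) s :=
    .of_forall fun s => (hγ s).norm_sq.const_sub 1
  have hf' := ((hasDerivAt_inner_deriv_comp (hγ t) (hθa _ (hγt ▸ hw)).differentiableAt
    (hθa.deriv _ (hγt ▸ hw)).differentiableAt).const_mul 2).neg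
  have hg' := (((hγ t).inner ℝ (hasDerivAt_const t v)).const_mul 2).neg
  unfold diagKernel
  rw [deriv_deriv_div hf hg hf' hg' (by rw [hγt]; exact (one_sub_norm_sq_pos hw).ne'), hγt]
  simp only [inner_zero_right, zero_add, real_inner_self_eq_norm_sq]
  ring

theorem planarLaplacian_diagKernel {θ : ℂ → ℂ} (hθ : DifferentiableOn ℂ θ (ball 0 1)) {z : ℂ}
    (hz : z ∈ ball (0 : ℂ) 1) :
    planarLaplacian (diagKernel θ) z =
      4 * ((1 - ‖θ z‖ ^ 2) * (1 + ‖z‖ ^ 2) - 2 * ⟪θ z * conj (deriv θ z), z⟫ * (1 - ‖z‖ ^ 2)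
        - ‖deriv θ z‖ ^ 2 * (1 - ‖z‖ ^ 2) ^ 2) / (1 - ‖z‖ ^ 2) ^ 3 := by
  have hx : ∀ s : ℝ, HasDerivAt (fun x : ℝ => (x : ℂ) + z.im * I) 1 s := fun s =>
    (hasDerivAt_id (s : ℂ)).comp_ofReal.add_const _
  have hy : ∀ s : ℝ, HasDerivAt (fun y : ℝ => (z.re : ℂ) + y * I) I s := fun s => by
    simpa using ((hasDerivAt_id (s : ℂ)).comp_ofReal.mul_const I).const_add (z.re : ℂ)
  rw [planarLaplacian, deriv_deriv_diagKernel_comp hθ hx (re_add_im z) hz,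
    deriv_deriv_diagKernel_comp hθ hy (re_add_im z) hz]
  have hG := (one_sub_norm_sq_pos hz).ne'
  simp only [Complex.inner, Complex.sq_norm, normSq_apply, mul_re, mul_im, conj_re, conj_im,
    one_re, one_im, I_re, I_im] at hG ⊢
  field_simp
  ring

/-- Upper bound for the Laplacian of the diagonal reproducing kernel
`k(z,z) = (1-|θ(z)|²)/(1-|z|²)`:
`Δ k(z,z) ≤ 4 (1+|z|)² (1-|θ(z)|²)/(1-|z|²)³`. -/
theorem laplacian_diag_kernel_upper
    (θ : ℂ → ℂ) (hθ : DifferentiableOn ℂ θ (Metric.ball 0 1))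
    (hb : ∀ z ∈ Metric.ball (0:ℂ) 1, ‖θ z‖ ≤ 1) :
    ∀ z ∈ Metric.ball (0:ℂ) 1,
      planarLaplacian (fun w => (1 - ‖θ w‖ ^ 2) / (1 - ‖w‖ ^ 2)) z ≤
        4 * (1 + ‖z‖) ^ 2 * (1 - ‖θ z‖ ^ 2) / (1 - ‖z‖ ^ 2) ^ 3 := by
  intro z hz
  change planarLaplacian (diagKernel θ) z ≤ _
  rw [planarLaplacian_diagKernel hθ hz]
  have hG := one_sub_norm_sq_pos hz
  have hpick := norm_deriv_mul_le_of_norm_le_one hθ hb hz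
  have hinner : -⟪θ z * conj (deriv θ z), z⟫ ≤ ‖deriv θ z‖ * ‖z‖ := by
    refine (neg_le_abs _).trans ((abs_real_inner_le_norm _ _).trans ?_)
    rw [norm_mul, RCLike.norm_conj]
    gcongr
    exact mul_le_of_le_one_left (norm_nonneg _) (hb z hz)
  gcongr ?_ / _
  nlinarith [mul_le_mul_of_nonneg_right hinner hG.le, mul_le_mul_of_nonneg_left hpick
    (norm_nonneg z), sq_nonneg (‖deriv θ z‖ * (1 - ‖z‖ ^ 2))]
end

section
/- Let θ(z) = exp(−(1+z)/(1−z)), a singular inner function on the unit disk, and let r_n = 1 − (1/n)2^{-2n}, α_n = 2^{-n}, z_n = r_n e^{iα_n}. Then the sequence {z_n} satisfies the Carleson interpolation condition: inf_n Π_{m≠n} |(z_n − z_m)/(1 − conj(z_m) z_n)| > 0. -/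
/-- `r_n = 1 - (1/n)·2^{-2n}` (indexed so that `n : ℕ` represents index `n+1 ≥ 1`). -/
noncomputable def rseq (n : ℕ) : ℝ :=
  1 - (1 / ((n : ℝ) + 1)) * (2 : ℝ) ^ (-(2 * ((n : ℝ) + 1)))

/-- `α_n = 2^{-n}` (indexed so that `n : ℕ` represents index `n+1 ≥ 1`). -/
noncomputable def aseq (n : ℕ) : ℝ := (2 : ℝ) ^ (-((n : ℝ) + 1))

/-- The sequence `z_n = r_n e^{iα_n}`. -/
noncomputable def zseq (n : ℕ) : ℂ :=
  (rseq n : ℂ) * Complex.exp ((aseq n : ℂ) * Complex.I)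

/-!
For `z, w` in the disc, `(1 - ρ(z, w)²) |1 - w̄ z|² = (1 - |z|²)(1 - |w|²)` where `ρ` is the
pseudo-hyperbolic distance, and `∏ ρ_m ≥ ∏ ρ_m² ≥ 1 - ∑ (1 - ρ_m²)`; so it is enough that
`∑_{m ≠ n} (1 - ρ(z_n, z_m)²) ≤ 2/3`. Each term is at most `2 · 4^{-max(n,m)}`: for pairs
involving `z_0 = (3/4) e^{i/2}` bound `|1 - w̄ z|` below by `1 - |z||w| ≥ 1/4`; for `1 ≤ n < m`
bound it below by `Im (z̄_m z_n) = r_n r_m sin (α_n - α_m)`, where the angular gap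
`α_n - α_m ≥ 2^{-(n+2)}` compensates the factor `1 - r_n² ≈ 4^{-n}`. Finally
`n 4^{-n} + ∑_{m > n} 4^{-m} ≤ 1/3` by Bernoulli's inequality `1 + 3n ≤ 4^n`.
-/

open Finset ComplexConjugate

noncomputable def pseudoHypDist (z w : ℂ) : ℝ := ‖(z - w) / (1 - conj w * z)‖

section Disc

variable {z w : ℂ}

theorem sq_norm_one_sub_conj_mul (z w : ℂ) :
    ‖1 - conj w * z‖ ^ 2 = ‖z - w‖ ^ 2 + (1 - ‖z‖ ^ 2) * (1 - ‖w‖ ^ 2) := by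
  simp only [Complex.sq_norm, Complex.normSq_apply, Complex.sub_re, Complex.sub_im,
    Complex.mul_re, Complex.mul_im, Complex.conj_re, Complex.conj_im, Complex.one_re,
    Complex.one_im]
  ring

theorem one_sub_norm_mul_le_norm_one_sub_conj_mul (z w : ℂ) :
    1 - ‖z‖ * ‖w‖ ≤ ‖1 - conj w * z‖ := by
  simpa [mul_comm] using norm_sub_norm_le (1 : ℂ) (conj w * z)

theorem pseudoHypDist_comm (z w : ℂ) : pseudoHypDist z w = pseudoHypDist w z := by
  rw [pseudoHypDist, pseudoHypDist, norm_div, norm_div, norm_sub_rev z w,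
    ← Complex.norm_conj (1 - conj w * z)]
  simp [mul_comm]

theorem abs_im_le_norm_one_sub (w : ℂ) : |w.im| ≤ ‖1 - w‖ := by
  simpa using Complex.abs_im_le_norm (1 - w)

theorem norm_one_sub_conj_mul_pos (hz : ‖z‖ < 1) (hw : ‖w‖ < 1) : 0 < ‖1 - conj w * z‖ :=
  (one_sub_norm_mul_le_norm_one_sub_conj_mul z w).trans_lt' <| by
    nlinarith [norm_nonneg z, norm_nonneg w]

theorem one_sub_pseudoHypDist_sq_mul (hz : ‖z‖ < 1) (hw : ‖w‖ < 1) :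
    (1 - pseudoHypDist z w ^ 2) * ‖1 - conj w * z‖ ^ 2 = (1 - ‖z‖ ^ 2) * (1 - ‖w‖ ^ 2) := by
  rw [pseudoHypDist, norm_div, div_pow, sub_mul,
    div_mul_cancel₀ _ (pow_pos (norm_one_sub_conj_mul_pos hz hw) 2).ne', sq_norm_one_sub_conj_mul]
  ring

theorem one_sub_pseudoHypDist_sq_nonneg (hz : ‖z‖ < 1) (hw : ‖w‖ < 1) :
    0 ≤ 1 - pseudoHypDist z w ^ 2 := by
  refine nonneg_of_mul_nonneg_left ?_ (pow_pos (norm_one_sub_conj_mul_pos hz hw) 2)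
  rw [one_sub_pseudoHypDist_sq_mul hz hw]
  have := norm_nonneg z
  have := norm_nonneg w
  apply mul_nonneg <;> nlinarith

theorem pseudoHypDist_le_one (hz : ‖z‖ < 1) (hw : ‖w‖ < 1) : pseudoHypDist z w ≤ 1 :=
  (pow_le_one_iff_of_nonneg (norm_nonneg _) two_ne_zero).1 <|
    sub_nonneg.1 (one_sub_pseudoHypDist_sq_nonneg hz hw)

theorem one_sub_pseudoHypDist_sq_mul_sq_le (hz : ‖z‖ < 1) (hw : ‖w‖ < 1) {t : ℝ}
    (ht₀ : 0 ≤ t) (ht : t ≤ ‖1 - conj w * z‖) :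
    (1 - pseudoHypDist z w ^ 2) * t ^ 2 ≤ (1 - ‖z‖ ^ 2) * (1 - ‖w‖ ^ 2) := by
  rw [← one_sub_pseudoHypDist_sq_mul hz hw]
  have := one_sub_pseudoHypDist_sq_nonneg hz hw
  gcongr

end Disc

theorem Finset.one_sub_sum_le_prod_one_sub {ι : Type*} (s : Finset ι) {f : ι → ℝ}
    (h₀ : ∀ i ∈ s, 0 ≤ f i) (h₁ : ∀ i ∈ s, f i ≤ 1) : 1 - ∑ i ∈ s, f i ≤ ∏ i ∈ s, (1 - f i) := by
  induction s using Finset.cons_induction with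
  | empty => simp
  | cons a s ha ih =>
    rw [sum_cons, prod_cons]
    have hs := ih (fun i hi ↦ h₀ i (mem_cons_of_mem hi)) (fun i hi ↦ h₁ i (mem_cons_of_mem hi))
    have ha₀ := h₀ a (mem_cons_self a s)
    have ha₁ := h₁ a (mem_cons_self a s)
    have := sum_nonneg fun i hi ↦ h₀ i (mem_cons_of_mem hi)
    nlinarith [mul_le_mul_of_nonneg_left hs (sub_nonneg.2 ha₁)]

theorem Finset.one_sub_le_prod_of_sum_one_sub_sq_le {ι : Type*} (s : Finset ι) {ρ : ι → ℝ}
    (h₀ : ∀ i ∈ s, 0 ≤ ρ i) (h₁ : ∀ i ∈ s, ρ i ≤ 1) {c : ℝ} (hc : ∑ i ∈ s, (1 - ρ i ^ 2) ≤ c) :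
    1 - c ≤ ∏ i ∈ s, ρ i :=
  calc 1 - c ≤ 1 - ∑ i ∈ s, (1 - ρ i ^ 2) := by linarith
    _ ≤ ∏ i ∈ s, (1 - (1 - ρ i ^ 2)) :=
      one_sub_sum_le_prod_one_sub s (fun i hi ↦ by nlinarith [h₀ i hi, h₁ i hi])
        (fun i _ ↦ by nlinarith)
    _ ≤ ∏ i ∈ s, ρ i :=
      prod_le_prod (fun i hi ↦ by nlinarith [h₀ i hi]) (fun i hi ↦ by nlinarith [h₀ i hi, h₁ i hi])

theorem Finset.sum_pow_le_div_one_sub {x : ℝ} (hx₀ : 0 ≤ x) (hx₁ : x < 1) {s : Finset ℕ} {k : ℕ}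
    (hs : ∀ m ∈ s, k ≤ m) : ∑ m ∈ s, x ^ m ≤ x ^ k / (1 - x) := by
  have hsub : s ⊆ Ico k (s.sup id + 1) := fun m hm ↦
    mem_Ico.2 ⟨hs m hm, Nat.lt_succ_of_le (le_sup (f := id) hm)⟩
  exact (sum_le_sum_of_subset_of_nonneg hsub fun _ _ _ ↦ by positivity).trans
    (geom_sum_Ico_le_of_lt_one hx₀ hx₁)

theorem Real.mul_le_sin_of_le_one {x : ℝ} (hx₀ : 0 ≤ x) (hx₁ : x ≤ 1) : 5 / 6 * x ≤ Real.sin x := by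
  rcases hx₀.eq_or_lt with rfl | hx
  · simp
  · nlinarith [Real.sin_gt_sub_cube hx, pow_le_one₀ hx₀ hx₁ (n := 2)]

theorem one_sub_rseq (n : ℕ) : 1 - rseq n = (1 / 4) ^ (n + 1) / (n + 1) := by
  have h : (2 : ℝ) ^ (-(2 * ((n : ℝ) + 1))) = (1 / 4) ^ (n + 1) := by
    rw [show 2 * ((n : ℝ) + 1) = ((2 * (n + 1) : ℕ) : ℝ) by push_cast; ring,
      Real.rpow_neg zero_le_two, Real.rpow_natCast, pow_mul, one_div_pow, one_div]
    norm_num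
  rw [rseq, h]
  ring

theorem aseq_eq (n : ℕ) : aseq n = (1 / 2) ^ (n + 1) := by
  rw [aseq, show (n : ℝ) + 1 = ((n + 1 : ℕ) : ℝ) by push_cast; ring,
    Real.rpow_neg zero_le_two, Real.rpow_natCast, one_div_pow, one_div]

theorem rseq_zero : rseq 0 = 3 / 4 := by
  linarith [one_sub_rseq 0]

theorem rseq_lt_one (n : ℕ) : rseq n < 1 := by
  have := one_sub_rseq n
  have : 0 < (1 / 4 : ℝ) ^ (n + 1) / (n + 1) := by positivity
  linarith

theorem one_sub_rseq_le (n : ℕ) : 1 - rseq n ≤ (1 / 4) ^ (n + 1) := by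
  rw [one_sub_rseq]
  exact div_le_self (by positivity) (by linarith [n.cast_nonneg (α := ℝ)])

theorem three_quarters_le_rseq (n : ℕ) : 3 / 4 ≤ rseq n := by
  have := one_sub_rseq_le n
  have : (1 / 4 : ℝ) ^ (n + 1) ≤ 1 / 4 := pow_le_of_le_one (by norm_num) (by norm_num) (by omega)
  linarith

theorem fifteen_sixteenths_le_rseq {n : ℕ} (hn : 1 ≤ n) : 15 / 16 ≤ rseq n := by
  have := one_sub_rseq_le n
  have : (1 / 4 : ℝ) ^ (n + 1) ≤ (1 / 4) ^ 2 :=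
    pow_le_pow_of_le_one (by norm_num) (by norm_num) (by omega)
  linarith

theorem one_sub_rseq_sq_le {n k : ℕ} (hk : k ≤ n) :
    1 - rseq n ^ 2 ≤ 2 / (k + 1) * (1 / 4) ^ (n + 1) := by
  have h : 1 - rseq n ≤ (1 / 4) ^ (n + 1) / (k + 1) := by
    rw [one_sub_rseq]
    gcongr
  rw [div_mul_eq_mul_div, mul_div_assoc]
  nlinarith [rseq_lt_one n, three_quarters_le_rseq n]

theorem norm_zseq (n : ℕ) : ‖zseq n‖ = rseq n := by
  rw [zseq, norm_mul, Complex.norm_exp_ofReal_mul_I, Complex.norm_real, Real.norm_eq_abs,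
    abs_of_pos (by linarith [three_quarters_le_rseq n]), mul_one]

theorem norm_zseq_lt_one (n : ℕ) : ‖zseq n‖ < 1 := norm_zseq n ▸ rseq_lt_one n

theorem im_conj_zseq_mul_zseq (m n : ℕ) :
    (conj (zseq m) * zseq n).im = rseq m * rseq n * Real.sin (aseq n - aseq m) := by
  simp only [zseq, map_mul, Complex.conj_ofReal, Complex.mul_im, Complex.mul_re,
    Complex.ofReal_re, Complex.ofReal_im, Complex.conj_re, Complex.conj_im,
    Complex.exp_ofReal_mul_I_re, Complex.exp_ofReal_mul_I_im, Real.sin_sub]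
  ring

theorem aseq_sub_aseq_mem {n m : ℕ} (h : n < m) :
    aseq n - aseq m ∈ Set.Icc ((1 / 2) ^ (n + 2)) ((1 / 2) ^ (n + 1)) := by
  have hm : (1 / 2 : ℝ) ^ (m + 1) ≤ (1 / 2) ^ (n + 2) :=
    pow_le_pow_of_le_one (by norm_num) (by norm_num) (by omega)
  have hm₀ : (0 : ℝ) < (1 / 2) ^ (m + 1) := by positivity
  have hn : (1 / 2 : ℝ) ^ (n + 1) = 2 * (1 / 2) ^ (n + 2) := by ring
  rw [aseq_eq, aseq_eq]
  constructor <;> linarith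

theorem one_sub_pseudoHypDist_zseq_zero_sq_le {m : ℕ} (hm : 1 ≤ m) :
    1 - pseudoHypDist (zseq 0) (zseq m) ^ 2 ≤ 2 * (1 / 4) ^ m := by
  have hF := one_sub_pseudoHypDist_sq_mul_sq_le (norm_zseq_lt_one 0) (norm_zseq_lt_one m)
    (t := 1 / 4) (by norm_num) <| by
      refine le_trans ?_ (one_sub_norm_mul_le_norm_one_sub_conj_mul _ _)
      rw [norm_zseq, norm_zseq, rseq_zero]
      linarith [rseq_lt_one m]
  rw [norm_zseq, norm_zseq, rseq_zero] at hF
  have hrm := one_sub_rseq_sq_le hm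
  rw [pow_succ (1 / 4 : ℝ) m] at hrm
  nlinarith [show (0 : ℝ) < (1 / 4) ^ m by positivity]

theorem sq_im_conj_zseq_mul_zseq_ge {n m : ℕ} (hn : 1 ≤ n) (h : n < m) :
    (1 / 4) ^ (n + 1) / 8 ≤ (conj (zseq m) * zseq n).im ^ 2 := by
  obtain ⟨hδ₁, hδ₂⟩ := aseq_sub_aseq_mem h
  have hδ₀ : 0 ≤ aseq n - aseq m := (by positivity : (0 : ℝ) ≤ (1 / 2) ^ (n + 2)).trans hδ₁
  have hsin := Real.mul_le_sin_of_le_one hδ₀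
    (hδ₂.trans (pow_le_one₀ (by norm_num) (by norm_num)))
  have hrn := fifteen_sixteenths_le_rseq hn
  have hrm := fifteen_sixteenths_le_rseq (hn.trans h.le)
  have him : 15 / 16 * (15 / 16) * (5 / 6 * (1 / 2) ^ (n + 2)) ≤ (conj (zseq m) * zseq n).im := by
    rw [im_conj_zseq_mul_zseq]
    exact mul_le_mul (mul_le_mul hrm hrn (by norm_num) (by linarith)) (by linarith)
      (by positivity) (by positivity)
  have hq : ((1 / 2 : ℝ) ^ (n + 2)) ^ 2 = (1 / 4) ^ (n + 1) / 4 := by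
    rw [← pow_mul, mul_comm, pow_mul]
    norm_num [pow_succ]
    ring
  nlinarith [pow_le_pow_left₀ (by positivity) him 2, show (0 : ℝ) < (1 / 4) ^ (n + 1) by positivity]

theorem one_sub_pseudoHypDist_zseq_sq_le_of_lt {n m : ℕ} (hn : 1 ≤ n) (h : n < m) :
    1 - pseudoHypDist (zseq n) (zseq m) ^ 2 ≤ 2 * (1 / 4) ^ m := by
  have hF := one_sub_pseudoHypDist_sq_mul_sq_le (norm_zseq_lt_one n) (norm_zseq_lt_one m)
    (abs_nonneg _) (abs_im_le_norm_one_sub (conj (zseq m) * zseq n))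
  rw [norm_zseq, norm_zseq, sq_abs] at hF
  have him := sq_im_conj_zseq_mul_zseq_ge hn h
  have hrn : 1 - rseq n ^ 2 ≤ (1 / 4) ^ (n + 1) :=
    (one_sub_rseq_sq_le (k := 1) hn).trans_eq (by norm_num)
  have hrm : 1 - rseq m ^ 2 ≤ 2 / 3 * ((1 / 4) ^ m * (1 / 4)) :=
    (one_sub_rseq_sq_le (k := 2) (hn.trans_lt h)).trans_eq (by rw [pow_succ]; norm_num)
  have hA : (1 - rseq n ^ 2) * (1 - rseq m ^ 2)
      ≤ (1 / 4) ^ (n + 1) * (2 / 3 * ((1 / 4) ^ m * (1 / 4))) :=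
    mul_le_mul hrn hrm (by nlinarith [rseq_lt_one m, three_quarters_le_rseq m]) (by positivity)
  have hF₀ := one_sub_pseudoHypDist_sq_nonneg (norm_zseq_lt_one n) (norm_zseq_lt_one m)
  nlinarith [show (0 : ℝ) < (1 / 4) ^ (n + 1) by positivity,
    show (0 : ℝ) < (1 / 4) ^ m by positivity]

theorem one_sub_pseudoHypDist_zseq_sq_le {n m : ℕ} (h : n ≠ m) :
    1 - pseudoHypDist (zseq n) (zseq m) ^ 2 ≤ 2 * (1 / 4) ^ max n m := by
  wlog hlt : n < m generalizing n m
  · rw [pseudoHypDist_comm, max_comm]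
    exact this h.symm (h.symm.lt_of_le (not_lt.1 hlt))
  rw [max_eq_right hlt.le]
  rcases Nat.eq_zero_or_pos n with rfl | hn
  · exact one_sub_pseudoHypDist_zseq_zero_sq_le hlt
  · exact one_sub_pseudoHypDist_zseq_sq_le_of_lt hn hlt

theorem sum_quarter_pow_max_le {n : ℕ} {S : Finset ℕ} (hS : n ∉ S) :
    ∑ m ∈ S, (1 / 4 : ℝ) ^ max n m ≤ 1 / 3 := by
  rw [← sum_filter_add_sum_filter_not S (· < n)]
  have hlow : ∑ m ∈ S with m < n, (1 / 4 : ℝ) ^ max n m ≤ n * (1 / 4) ^ n := by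
    have hcard : #{m ∈ S | m < n} ≤ n :=
      (card_le_card fun m hm ↦ mem_range.2 (mem_filter.1 hm).2).trans (card_range n).le
    calc ∑ m ∈ S with m < n, (1 / 4 : ℝ) ^ max n m
        = ∑ m ∈ S with m < n, (1 / 4 : ℝ) ^ n :=
          sum_congr rfl fun m hm ↦ by rw [max_eq_left (mem_filter.1 hm).2.le]
      _ ≤ n * (1 / 4) ^ n := by
          rw [sum_const, nsmul_eq_mul]
          gcongr
  have hhigh : ∑ m ∈ S with ¬m < n, (1 / 4 : ℝ) ^ max n m ≤ (1 / 4) ^ n / 3 := by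
    have hgt : ∀ m ∈ S.filter (¬· < n), n + 1 ≤ m := fun m hm ↦ by
      have := mem_filter.1 hm
      exact Nat.lt_of_le_of_ne (not_lt.1 this.2) (fun h ↦ hS (h ▸ this.1))
    calc ∑ m ∈ S with ¬m < n, (1 / 4 : ℝ) ^ max n m
        = ∑ m ∈ S with ¬m < n, (1 / 4 : ℝ) ^ m :=
          sum_congr rfl fun m hm ↦ by rw [max_eq_right (not_lt.1 (mem_filter.1 hm).2)]
      _ ≤ (1 / 4) ^ (n + 1) / (1 - 1 / 4) := sum_pow_le_div_one_sub (by norm_num) (by norm_num) hgt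
      _ = (1 / 4) ^ n / 3 := by rw [pow_succ]; ring
  have hbern : 1 + (n : ℝ) * 3 ≤ 4 ^ n := by
    simpa [show (1 : ℝ) + 3 = 4 by norm_num] using one_add_mul_le_pow (a := (3 : ℝ)) (by norm_num) n
  have : (1 / 4 : ℝ) ^ n * 4 ^ n = 1 := by rw [← mul_pow]; norm_num
  nlinarith [show (0 : ℝ) < (1 / 4) ^ n by positivity]

/-- The sequence `{z_n}` satisfies the Carleson interpolation condition
`inf_n Π_{m ≠ n} |(z_n - z_m)/(1 - conj(z_m) z_n)| > 0` (equivalently, all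
finite partial products avoiding the index `n` are uniformly bounded below). -/
theorem zseq_uniformly_separated :
    ∃ δ : ℝ, 0 < δ ∧ ∀ n : ℕ, ∀ S : Finset ℕ, n ∉ S →
      δ ≤ ∏ m ∈ S, ‖(zseq n - zseq m) / (1 - (starRingEnd ℂ) (zseq m) * zseq n)‖ := by
  refine ⟨1 / 3, by norm_num, fun n S hS ↦ ?_⟩
  have hsum : ∑ m ∈ S, (1 - pseudoHypDist (zseq n) (zseq m) ^ 2) ≤ 2 / 3 :=
    calc ∑ m ∈ S, (1 - pseudoHypDist (zseq n) (zseq m) ^ 2)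
        ≤ ∑ m ∈ S, 2 * (1 / 4 : ℝ) ^ max n m :=
          sum_le_sum fun m hm ↦ one_sub_pseudoHypDist_zseq_sq_le fun h ↦ hS (h ▸ hm)
      _ ≤ 2 / 3 := by rw [← mul_sum]; linarith [sum_quarter_pow_max_le hS]
  calc (1 / 3 : ℝ) = 1 - 2 / 3 := by norm_num
    _ ≤ ∏ m ∈ S, pseudoHypDist (zseq n) (zseq m) :=
      one_sub_le_prod_of_sum_one_sub_sq_le S (fun m _ ↦ norm_nonneg _)
        (fun m _ ↦ pseudoHypDist_le_one (norm_zseq_lt_one n) (norm_zseq_lt_one m)) hsum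
end
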